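/- arXiv:2003.04248 — 7 statements merged into one kernel-verified Lean document; each statement's English description precedes it below -/
import Mathlib

section
/- Let a_n ≥ 0, b_{n,j} ≥ 0 with b_{n,j} = 0 for n ≥ j, let w_n > 0, and suppose there is κ ∈ (0,1] such that ∑_{n=1}^{j-1} w_n·b_{n,j} ≤ κ·w_j for all j ≥ 2. Then for every real sequence f = (f_n)_{n≥1} with ∑_{n=1}^∞ w_n·a_n·|f_n| < ∞, the series ∑_{j=n+1}^∞ a_j·b_{n,j}·f_j converges absolutely for every n, and ∑_{n=1}^∞ w_n·|∑_{j=n+1}^∞ a_j·b_{n,j}·f_j| ≤ κ·∑_{n=1}^∞ w_n·a_n·|f_n| < ∞. -/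
open scoped ENNReal NNReal


/-- The estimate `‖B^{(w)} f‖_w ≤ κ ‖A^{(w)} f‖_w`: if `∑ w_n a_n |f_n| < ∞`, then
each gain series converges absolutely and
`∑_{n=1}^∞ w_n |∑_{j=n+1}^∞ a_j b_{n,j} f_j| ≤ κ ∑_{n=1}^∞ w_n a_n |f_n| < ∞`. -/
theorem stmt_2 (a : ℕ → ℝ) (b : ℕ → ℕ → ℝ) (w : ℕ → ℝ) (κ : ℝ)
    (ha : ∀ n : ℕ, 1 ≤ n → 0 ≤ a n)
    (hb_nonneg : ∀ n j : ℕ, 0 ≤ b n j)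
    (hb_zero : ∀ n j : ℕ, j ≤ n → b n j = 0)
    (hw_pos : ∀ n : ℕ, 1 ≤ n → 0 < w n)
    (hκ0 : 0 < κ) (hκ1 : κ ≤ 1)
    (hcond : ∀ j : ℕ, 2 ≤ j → ∑ n ∈ Finset.Ico 1 j, w n * b n j ≤ κ * w j)
    (f : ℕ → ℝ)
    (hsum : Summable (fun n : ℕ => w (n + 1) * a (n + 1) * |f (n + 1)|)) :
    (∀ n : ℕ, 1 ≤ n →
      Summable (fun k : ℕ => |a (n + 1 + k) * b n (n + 1 + k) * f (n + 1 + k)|)) ∧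
    Summable (fun n : ℕ =>
      w (n + 1) * |∑' k : ℕ, a (n + 2 + k) * b (n + 1) (n + 2 + k) * f (n + 2 + k)|) ∧
    ∑' n : ℕ, w (n + 1) * |∑' k : ℕ, a (n + 2 + k) * b (n + 1) (n + 2 + k) * f (n + 2 + k)|
      ≤ κ * ∑' n : ℕ, w (n + 1) * a (n + 1) * |f (n + 1)| := by
  classical
  set g : ℕ → ℝ := fun m => w (m + 1) * a (m + 1) * |f (m + 1)| with hgdef
  have hg_nonneg : ∀ m, 0 ≤ g m := fun m =>
    mul_nonneg (mul_nonneg (hw_pos (m + 1) (by omega)).le (ha (m + 1) (by omega)))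
      (abs_nonneg _)
  -- pointwise bound on b
  have hbz : ∀ n j : ℕ, 1 ≤ n → n < j → w n * b n j ≤ κ * w j := by
    intro n j hn hnj
    calc w n * b n j ≤ ∑ m ∈ Finset.Ico 1 j, w m * b m j :=
          Finset.single_le_sum
            (fun m hm => mul_nonneg (hw_pos m (Finset.mem_Ico.mp hm).1).le (hb_nonneg m j))
            (Finset.mem_Ico.mpr ⟨hn, hnj⟩)
      _ ≤ κ * w j := hcond j (by omega)
  have habs : ∀ n j : ℕ, 1 ≤ j → |a j * b n j * f j| = a j * b n j * |f j| := by
    intro n j hj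
    rw [abs_mul, abs_mul, abs_of_nonneg (ha j hj), abs_of_nonneg (hb_nonneg n j)]
  -- Part 1
  have key1 : ∀ n : ℕ, 1 ≤ n →
      Summable (fun k : ℕ => |a (n + 1 + k) * b n (n + 1 + k) * f (n + 1 + k)|) := by
    intro n hn
    have hwn := hw_pos n hn
    have hgs : Summable (fun k : ℕ => (κ / w n) * g (k + n)) :=
      (((summable_nat_add_iff n).mpr hsum).mul_left _)
    refine Summable.of_nonneg_of_le (fun k => abs_nonneg _) (fun k => ?_) hgs
    have hj : n + 1 + k = (k + n) + 1 := by omega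
    rw [hj]
    set j := (k + n) + 1 with hjdef
    have hj1 : 1 ≤ j := by omega
    have hwj := hw_pos j hj1
    have hb := hbz n j hn (by omega)
    rw [habs n j hj1]
    have hbnj : b n j ≤ κ * w j / w n := by
      rw [le_div_iff₀ hwn]; nlinarith
    have hgk : g (k + n) = w j * a j * |f j| := rfl
    rw [hgk]
    calc a j * b n j * |f j| ≤ a j * (κ * w j / w n) * |f j| :=
          mul_le_mul_of_nonneg_right
            (mul_le_mul_of_nonneg_left hbnj (ha j hj1)) (abs_nonneg _)
      _ = κ / w n * (w j * a j * |f j|) := by field_simp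
  refine ⟨key1, ?_⟩
  -- absolute inner series for part 2
  have key2 : ∀ n : ℕ,
      Summable (fun k : ℕ => |a (n + 2 + k) * b (n + 1) (n + 2 + k) * f (n + 2 + k)|) := by
    intro n
    have := key1 (n + 1) (by omega)
    have he : ∀ k : ℕ, n + 1 + 1 + k = n + 2 + k := fun k => by omega
    simpa only [he] using this
  set v : ℕ → ℝ := fun n => ∑' k, |a (n + 2 + k) * b (n + 1) (n + 2 + k) * f (n + 2 + k)|
    with hvdef
  have hv_nonneg : ∀ n, 0 ≤ v n := fun n => tsum_nonneg fun k => abs_nonneg _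
  set u : ℕ → ℝ := fun n => w (n + 1) * v n with hudef
  have hu_nonneg : ∀ n, 0 ≤ u n := fun n =>
    mul_nonneg (hw_pos (n + 1) (by omega)).le (hv_nonneg n)
  -- ENNReal double sum
  set φ : ℕ → ℕ → ℝ≥0∞ :=
    fun n j => ENNReal.ofReal (w (n + 1) * |a j * b (n + 1) j * f j|) with hφdef
  have hφ_zero : ∀ n j : ℕ, j ≤ n + 1 → φ n j = 0 := by
    intro n j hj
    simp [hφdef, hb_zero (n + 1) j hj]
  -- row sums
  have hrow : ∀ n : ℕ, (∑' j : ℕ, φ n j) = ENNReal.ofReal (u n) := by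
    intro n
    have hinj : Function.Injective (fun k : ℕ => n + 2 + k) := fun x y h => by simpa using h
    have hsupp : Function.support (φ n) ⊆ Set.range (fun k : ℕ => n + 2 + k) := by
      intro j hj
      by_contra hjr
      have hjle : j ≤ n + 1 := by
        by_contra hlt
        exact hjr ⟨j - (n + 2), by show n + 2 + (j - (n + 2)) = j; omega⟩
      exact hj (hφ_zero n j hjle)
    have h1 : (∑' k : ℕ, φ n (n + 2 + k)) = ∑' j : ℕ, φ n j :=
      Function.Injective.tsum_eq hinj hsupp
    rw [← h1]
    have h2 : (∑' k : ℕ, φ n (n + 2 + k)) =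
        ENNReal.ofReal (∑' k : ℕ, w (n + 1) * |a (n + 2 + k) * b (n + 1) (n + 2 + k) * f (n + 2 + k)|) := by
      rw [ENNReal.ofReal_tsum_of_nonneg
        (fun k => mul_nonneg (hw_pos (n + 1) (by omega)).le (abs_nonneg _))
        ((key2 n).mul_left _)]
    rw [h2, hudef]
    congr 1
    simp only [hvdef]
    exact tsum_mul_left
  -- column bound
  set ψ : ℕ → ℝ≥0∞ := fun j => Nat.rec 0 (fun m _ => ENNReal.ofReal (κ * g m)) j with hψdef
  have hcol : ∀ j : ℕ, (∑' n : ℕ, φ n j) ≤ ψ j := by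
    intro j
    match j with
    | 0 =>
      have : ∀ n : ℕ, φ n 0 = 0 := fun n => hφ_zero n 0 (by omega)
      simp [this, hψdef]
    | (m + 1) =>
      set j := m + 1 with hjdef
      have hj1 : 1 ≤ j := by omega
      have hz : ∀ n : ℕ, n ∉ Finset.range m → φ n j = 0 := by
        intro n hn
        exact hφ_zero n j (by simp [Finset.mem_range] at hn; omega)
      rw [tsum_eq_sum hz]
      have heq : ∀ n ∈ Finset.range m,
          φ n j = ENNReal.ofReal ((w (n + 1) * b (n + 1) j) * (a j * |f j|)) := by
        intro n _
        simp only [hφdef]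
        congr 1
        rw [habs (n + 1) j hj1]; ring
      rw [Finset.sum_congr rfl heq,
        ← ENNReal.ofReal_sum_of_nonneg (fun n _ =>
          mul_nonneg (mul_nonneg (hw_pos (n + 1) (by omega)).le (hb_nonneg _ _))
            (mul_nonneg (ha j hj1) (abs_nonneg _)))]
      have hsum_b : ∑ n ∈ Finset.range m, w (n + 1) * b (n + 1) j ≤ κ * w j := by
        rcases Nat.eq_zero_or_pos m with hm | hm
        · subst hm
          simp only [Finset.range_zero, Finset.sum_empty]
          exact mul_nonneg hκ0.le (hw_pos j hj1).le
        · have h2j : 2 ≤ j := by omega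
          have := hcond j h2j
          rw [Finset.sum_Ico_eq_sum_range] at this
          have hjm : j - 1 = m := by omega
          rw [hjm] at this
          calc ∑ n ∈ Finset.range m, w (n + 1) * b (n + 1) j
              = ∑ n ∈ Finset.range m, w (1 + n) * b (1 + n) j := by
                apply Finset.sum_congr rfl
                intro n _
                rw [add_comm n 1]
            _ ≤ κ * w j := this
      have hgm : g m = w j * a j * |f j| := rfl
      apply ENNReal.ofReal_le_ofReal
      rw [← Finset.sum_mul, hgm]
      calc (∑ n ∈ Finset.range m, w (n + 1) * b (n + 1) j) * (a j * |f j|)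
          ≤ (κ * w j) * (a j * |f j|) :=
            mul_le_mul_of_nonneg_right hsum_b (mul_nonneg (ha j hj1) (abs_nonneg _))
        _ = κ * (w j * a j * |f j|) := by ring
  -- total bound
  set S : ℝ := ∑' m, g m with hSdef
  have hS_nonneg : 0 ≤ S := tsum_nonneg hg_nonneg
  have hψsum : (∑' j : ℕ, ψ j) = ENNReal.ofReal (κ * S) := by
    have hinj : Function.Injective Nat.succ := fun x y h => by omega
    have hsupp : Function.support ψ ⊆ Set.range Nat.succ := by
      intro j hj
      match j with
      | 0 => exact absurd rfl hj
      | (m + 1) => exact ⟨m, rfl⟩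
    have h1 : (∑' m : ℕ, ψ (Nat.succ m)) = ∑' j : ℕ, ψ j :=
      Function.Injective.tsum_eq hinj hsupp
    rw [← h1]
    have h2 : ∀ m : ℕ, ψ (Nat.succ m) = ENNReal.ofReal (κ * g m) := fun m => rfl
    simp only [h2]
    rw [← ENNReal.ofReal_tsum_of_nonneg (fun m => mul_nonneg hκ0.le (hg_nonneg m))
      (hsum.mul_left κ)]
    congr 1
    exact tsum_mul_left
  have htot : (∑' n : ℕ, ENNReal.ofReal (u n)) ≤ ENNReal.ofReal (κ * S) := by
    calc (∑' n : ℕ, ENNReal.ofReal (u n)) = ∑' n : ℕ, ∑' j : ℕ, φ n j := by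
          simp only [hrow]
      _ = ∑' j : ℕ, ∑' n : ℕ, φ n j := ENNReal.tsum_comm
      _ ≤ ∑' j : ℕ, ψ j := ENNReal.tsum_le_tsum hcol
      _ = ENNReal.ofReal (κ * S) := hψsum
  -- summability of u
  have hU : Summable u := by
    have hne : (∑' n : ℕ, ENNReal.ofReal (u n)) ≠ ⊤ :=
      ne_top_of_le_ne_top ENNReal.ofReal_ne_top htot
    have h1 : Summable (fun n => (u n).toNNReal) :=
      ENNReal.tsum_coe_ne_top_iff_summable.mp (by simpa [ENNReal.ofReal] using hne)
    have h2 := NNReal.summable_coe.mpr h1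
    refine h2.congr fun n => ?_
    exact Real.coe_toNNReal _ (hu_nonneg n)
  have hUle : (∑' n, u n) ≤ κ * S := by
    have h1 : ENNReal.ofReal (∑' n, u n) ≤ ENNReal.ofReal (κ * S) := by
      rw [ENNReal.ofReal_tsum_of_nonneg hu_nonneg hU]
      exact htot
    exact (ENNReal.ofReal_le_ofReal_iff (mul_nonneg hκ0.le hS_nonneg)).mp h1
  -- compare with the actual series
  have hBle : ∀ n : ℕ,
      w (n + 1) * |∑' k : ℕ, a (n + 2 + k) * b (n + 1) (n + 2 + k) * f (n + 2 + k)| ≤ u n := by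
    intro n
    have hs : Summable (fun k : ℕ => a (n + 2 + k) * b (n + 1) (n + 2 + k) * f (n + 2 + k)) :=
      Summable.of_norm (by simpa only [Real.norm_eq_abs] using key2 n)
    have habs' : |∑' k : ℕ, a (n + 2 + k) * b (n + 1) (n + 2 + k) * f (n + 2 + k)| ≤ v n := by
      have := norm_tsum_le_tsum_norm
        (f := fun k : ℕ => a (n + 2 + k) * b (n + 1) (n + 2 + k) * f (n + 2 + k))
        (by simpa only [Real.norm_eq_abs] using key2 n)
      simpa only [Real.norm_eq_abs, hvdef] using this
    exact mul_le_mul_of_nonneg_left habs' (hw_pos (n + 1) (by omega)).le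
  have hBsummable : Summable (fun n : ℕ =>
      w (n + 1) * |∑' k : ℕ, a (n + 2 + k) * b (n + 1) (n + 2 + k) * f (n + 2 + k)|) :=
    Summable.of_nonneg_of_le
      (fun n => mul_nonneg (hw_pos (n + 1) (by omega)).le (abs_nonneg _)) hBle hU
  refine ⟨hBsummable, ?_⟩
  calc (∑' n : ℕ, w (n + 1) * |∑' k : ℕ, a (n + 2 + k) * b (n + 1) (n + 2 + k) * f (n + 2 + k)|)
      ≤ ∑' n, u n := Summable.tsum_le_tsum hBle hBsummable hU
    _ ≤ κ * S := hUle
end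

section
/- Let a = (a_n)_{n≥1} be an unbounded sequence with a_n ≥ 0 for all n, define c_n = max{a_1, …, a_n} for each n, and let w = (w_n)_{n≥1} be any sequence of positive reals. Then the following are equivalent: (i) every real sequence f = (f_n)_{n≥1} with ∑_{n=1}^∞ w_n·|f_n| < ∞ and ∑_{n=1}^∞ w_n·a_n·|f_n| < ∞ also satisfies ∑_{n=1}^∞ w_n·c_n·|f_n| < ∞; (ii) liminf_{n→∞} a_n/c_n > 0. -/
open Filter

/-- For an unbounded nonnegative sequence `a` with running maximum
`c_n = max {a_1, …, a_n}` and any positive weight `w`, one has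
`D(A^{(w)}) = D(C^{(w)})` if and only if `liminf a_n / c_n > 0`. -/
theorem stmt_4 (a c w : ℕ → ℝ)
    (ha : ∀ n : ℕ, 1 ≤ n → 0 ≤ a n)
    (ha_unbdd : ∀ M : ℝ, ∃ n : ℕ, 1 ≤ n ∧ M < a n)
    (hw : ∀ n : ℕ, 1 ≤ n → 0 < w n)
    (hc : ∀ n : ℕ, ∀ hn : 1 ≤ n,
      c n = (Finset.Icc 1 n).sup' (Finset.nonempty_Icc.mpr hn) a) :
    (∀ f : ℕ → ℝ,
        Summable (fun n : ℕ => w (n + 1) * |f (n + 1)|) →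
        Summable (fun n : ℕ => w (n + 1) * a (n + 1) * |f (n + 1)|) →
        Summable (fun n : ℕ => w (n + 1) * c (n + 1) * |f (n + 1)|)) ↔
      0 < Filter.atTop.liminf (fun n : ℕ => a n / c n) := by
  classical
  obtain ⟨m, hm1, hm⟩ := ha_unbdd 0
  have hle : ∀ M n : ℕ, 1 ≤ M → M ≤ n → a M ≤ c n := by
    intro M n hM hMn
    rw [hc n (hM.trans hMn)]
    exact Finset.le_sup' a (Finset.mem_Icc.mpr ⟨hM, hMn⟩)
  have hca : ∀ n, 1 ≤ n → a n ≤ c n := fun n hn => hle n n hn le_rfl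
  have hc0 : ∀ n, 1 ≤ n → 0 ≤ c n := fun n hn => (ha n hn).trans (hca n hn)
  have hcpos : ∀ n, m ≤ n → 0 < c n := fun n hn => hm.trans_le (hle m n hm1 hn)
  have hr0 : ∀ᶠ n in atTop, 0 ≤ a n / c n := by
    filter_upwards [eventually_ge_atTop m] with n hn
    exact div_nonneg (ha n (hm1.trans hn)) (hcpos n hn).le
  have hr1 : ∀ᶠ n in atTop, a n / c n ≤ 1 := by
    filter_upwards [eventually_ge_atTop m] with n hn
    exact div_le_one_of_le₀ (hca n (hm1.trans hn)) (hcpos n hn).le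
  constructor
  · intro H
    by_contra hlim
    push_neg at hlim
    have hfreq : ∀ ε : ℝ, 0 < ε → ∃ᶠ n in atTop, a n / c n < ε := by
      intro ε hε
      by_contra hcon
      rw [Filter.not_frequently] at hcon
      simp only [not_lt] at hcon
      have hcb : atTop.IsCoboundedUnder (· ≥ ·) (fun n : ℕ => a n / c n) :=
        isCoboundedUnder_ge_of_eventually_le _ hr1
      have : ε ≤ atTop.liminf (fun n : ℕ => a n / c n) := le_liminf_of_le hcb hcon
      linarith
    have key : ∀ k N : ℕ, ∃ n : ℕ, N < n ∧
        a n / c n < (1 / 2 : ℝ) ^ k ∧ (2 : ℝ) ^ k ≤ c n := by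
      intro k N
      obtain ⟨M, hM1, hM⟩ := ha_unbdd ((2 : ℝ) ^ k)
      obtain ⟨n, hn, hrn⟩ :=
        ((hfreq ((1 / 2 : ℝ) ^ k) (by positivity)).and_eventually
          (eventually_ge_atTop (max (N + 1) M))).exists
      refine ⟨n, lt_of_lt_of_le (Nat.lt_succ_self N) ((le_max_left _ _).trans hrn), hn, ?_⟩
      exact hM.le.trans (hle M n hM1 ((le_max_right _ _).trans hrn))
    choose g hg1 hg2 hg3 using key
    set φ : ℕ → ℕ := fun k => Nat.rec (g 0 0) (fun k ih => g (k + 1) ih) k with hφ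
    have hφs : ∀ k, φ (k + 1) = g (k + 1) (φ k) := fun k => rfl
    have hφmono : StrictMono φ := strictMono_nat_of_lt_succ fun k => by
      rw [hφs]; exact hg1 (k + 1) (φ k)
    have hφprop : ∀ k, a (φ k) / c (φ k) < (1 / 2 : ℝ) ^ k ∧ (2 : ℝ) ^ k ≤ c (φ k) := by
      intro k
      cases k with
      | zero => exact ⟨hg2 0 0, hg3 0 0⟩
      | succ k => rw [hφs]; exact ⟨hg2 (k + 1) (φ k), hg3 (k + 1) (φ k)⟩
    have hφ1 : ∀ k, 1 ≤ φ k := by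
      intro k
      have h0 : 0 < φ 0 := hg1 0 0
      exact h0.trans_le (hφmono.monotone (Nat.zero_le k))
    have hφcpos : ∀ k, 0 < c (φ k) := fun k =>
      lt_of_lt_of_le (by positivity) (hφprop k).2
    set f : ℕ → ℝ := fun n => if ∃ k, φ k = n then 1 / (w n * c n) else 0 with hf
    have hfφ : ∀ k, f (φ k) = 1 / (w (φ k) * c (φ k)) := fun k => if_pos ⟨k, rfl⟩
    have hf0 : ∀ n, n ∉ Set.range φ → f n = 0 := by
      intro n hn
      exact if_neg (by simpa [Set.range] using hn)
    -- the three composed sequences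
    have hval1 : ∀ k, w (φ k) * |f (φ k)| = 1 / c (φ k) := by
      intro k
      have hwk := hw (φ k) (hφ1 k)
      have hck := hφcpos k
      rw [hfφ k, abs_of_nonneg (by positivity)]
      field_simp
    have hval2 : ∀ k, w (φ k) * a (φ k) * |f (φ k)| = a (φ k) / c (φ k) := by
      intro k
      have hwk := hw (φ k) (hφ1 k)
      have hck := hφcpos k
      rw [hfφ k, abs_of_nonneg (by positivity)]
      field_simp
    have hval3 : ∀ k, w (φ k) * c (φ k) * |f (φ k)| = 1 := by
      intro k
      have hwk := hw (φ k) (hφ1 k)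
      have hck := hφcpos k
      rw [hfφ k, abs_of_nonneg (by positivity)]
      field_simp
    have hgeom : Summable fun k : ℕ => (1 / 2 : ℝ) ^ k :=
      summable_geometric_of_lt_one (by norm_num) (by norm_num)
    -- summability of the full (unshifted) sequences via injectivity
    have hs1 : Summable fun n : ℕ => w n * |f n| := by
      rw [← hφmono.injective.summable_iff (f := fun n => w n * |f n|)
        (fun n hn => by simp [hf0 n hn])]
      refine Summable.of_nonneg_of_le (fun k => ?_) (fun k => ?_) hgeom
      · simp only [Function.comp_apply, hval1]
        exact one_div_nonneg.mpr (hφcpos k).le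
      · simp only [Function.comp_apply, hval1]
        rw [div_le_iff₀ (hφcpos k)]
        calc (1 : ℝ) = (1 / 2 : ℝ) ^ k * 2 ^ k := by
              rw [div_pow, one_pow, div_mul_cancel₀]; positivity
          _ ≤ (1 / 2 : ℝ) ^ k * c (φ k) := by
              have := (hφprop k).2
              have h2 : (0:ℝ) ≤ (1 / 2 : ℝ) ^ k := by positivity
              nlinarith
    have hs2 : Summable fun n : ℕ => w n * a n * |f n| := by
      rw [← hφmono.injective.summable_iff (f := fun n => w n * a n * |f n|)
        (fun n hn => by simp [hf0 n hn])]
      refine Summable.of_nonneg_of_le (fun k => ?_) (fun k => ?_) hgeom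
      · simp only [Function.comp_apply, hval2]
        exact div_nonneg (ha (φ k) (hφ1 k)) (hφcpos k).le
      · simp only [Function.comp_apply, hval2]
        exact (hφprop k).1.le
    have hs3 := H f ((summable_nat_add_iff (f := fun n => w n * |f n|) 1).mpr hs1)
      ((summable_nat_add_iff (f := fun n => w n * a n * |f n|) 1).mpr hs2)
    have hs3' : Summable fun n : ℕ => w n * c n * |f n| :=
      (summable_nat_add_iff (f := fun n => w n * c n * |f n|) 1).mp hs3
    have hs4 : Summable fun k : ℕ => w (φ k) * c (φ k) * |f (φ k)| :=
      (hφmono.injective.summable_iff (f := fun n => w n * c n * |f n|)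
        (fun n hn => by simp [hf0 n hn])).mpr hs3'
    have : (fun k : ℕ => w (φ k) * c (φ k) * |f (φ k)|) = fun _ => (1 : ℝ) :=
      funext hval3
    rw [this] at hs4
    exact zero_ne_one (tendsto_nhds_unique hs4.tendsto_atTop_zero tendsto_const_nhds)
  · intro hL f hf1 hf2
    set L := atTop.liminf (fun n : ℕ => a n / c n) with hLdef
    have hbdd : atTop.IsBoundedUnder (· ≥ ·) (fun n : ℕ => a n / c n) := ⟨0, by
      simpa using hr0⟩
    have hev : ∀ᶠ n in atTop, L / 2 < a n / c n :=
      eventually_lt_of_lt_liminf (by linarith) hbdd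
    obtain ⟨N, hN⟩ := (hev.and (eventually_ge_atTop m)).exists_forall_of_atTop
    refine (summable_nat_add_iff (f := fun n => w (n + 1) * c (n + 1) * |f (n + 1)|) N).mp ?_
    have hsum : Summable fun n : ℕ => (2 / L) * (w (n + N + 1) * a (n + N + 1) * |f (n + N + 1)|) :=
      ((summable_nat_add_iff (f := fun n => w (n + 1) * a (n + 1) * |f (n + 1)|) N).mpr
        hf2).mul_left _
    refine Summable.of_nonneg_of_le (fun n => ?_) (fun n => ?_) hsum
    · have h1 : 1 ≤ n + N + 1 := by omega
      exact mul_nonneg (mul_nonneg (hw _ h1).le (hc0 _ h1)) (abs_nonneg _)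
    · have h1 : 1 ≤ n + N + 1 := by omega
      obtain ⟨hlt, hmn⟩ := hN (n + N + 1) (by omega)
      have hcp : 0 < c (n + N + 1) := hcpos _ hmn
      have hcl : c (n + N + 1) ≤ (2 / L) * a (n + N + 1) := by
        rw [lt_div_iff₀ hcp] at hlt
        rw [div_mul_eq_mul_div, le_div_iff₀ hL]
        nlinarith
      have hnn : 0 ≤ w (n + N + 1) * |f (n + N + 1)| :=
        mul_nonneg (hw _ h1).le (abs_nonneg _)
      calc w (n + N + 1) * c (n + N + 1) * |f (n + N + 1)|
          = c (n + N + 1) * (w (n + N + 1) * |f (n + N + 1)|) := by ring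
        _ ≤ ((2 / L) * a (n + N + 1)) * (w (n + N + 1) * |f (n + N + 1)|) :=
            mul_le_mul_of_nonneg_right hcl hnn
        _ = (2 / L) * (w (n + N + 1) * a (n + N + 1) * |f (n + N + 1)|) := by ring
end

section
/- Let b_{n,j} ≥ 0 with b_{n,j} = 0 for n ≥ j satisfy ∑_{n=1}^{j-1} n·b_{n,j} ≤ j for all j ≥ 2. Let δ ∈ (0,1) and let w = (w_n)_{n≥1} satisfy 1 ≤ w_n/n and w_n/n ≤ δ·w_{n+1}/(n+1) for all n ≥ 1. Then ∑_{n=1}^{j-1} w_n·b_{n,j} ≤ δ·w_j for all j ≥ 2. -/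
/-- If no mass is gained in fragmentation events and the weight satisfies
`1 ≤ w_n/n ≤ δ w_{n+1}/(n+1)` with `δ ∈ (0,1)`, then the strict contractivity
condition `∑_{n=1}^{j-1} w_n b_{n,j} ≤ δ w_j` holds for all `j ≥ 2`. -/
theorem stmt_5 (b : ℕ → ℕ → ℝ) (w : ℕ → ℝ) (δ : ℝ)
    (hb_nonneg : ∀ n j : ℕ, 0 ≤ b n j)
    (hb_zero : ∀ n j : ℕ, j ≤ n → b n j = 0)
    (hmass : ∀ j : ℕ, 2 ≤ j → ∑ n ∈ Finset.Ico 1 j, (n : ℝ) * b n j ≤ (j : ℝ))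
    (hδ0 : 0 < δ) (hδ1 : δ < 1)
    (hw1 : ∀ n : ℕ, 1 ≤ n → 1 ≤ w n / (n : ℝ))
    (hw2 : ∀ n : ℕ, 1 ≤ n → w n / (n : ℝ) ≤ δ * (w (n + 1) / ((n : ℝ) + 1))) :
    ∀ j : ℕ, 2 ≤ j → ∑ n ∈ Finset.Ico 1 j, w n * b n j ≤ δ * w j := by
  -- key: for 1 ≤ n < j, w n / n ≤ δ * (w j / j)
  have key : ∀ j n : ℕ, 1 ≤ n → n < j → w n / (n : ℝ) ≤ δ * (w j / (j : ℝ)) := by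
    intro j
    induction j with
    | zero => intro n hn h; omega
    | succ k ih =>
      intro n hn h
      have hc : ((k + 1 : ℕ) : ℝ) = (k : ℝ) + 1 := by push_cast; ring
      rw [hc]
      rcases Nat.lt_succ_iff_lt_or_eq.mp h with h' | h'
      · have hk1 : 1 ≤ k := by omega
        have hpos : 0 ≤ w (k + 1) / ((k : ℝ) + 1) := by
          have h1 := hw1 (k + 1) (by omega)
          rw [hc] at h1
          linarith
        calc w n / (n : ℝ) ≤ δ * (w k / (k : ℝ)) := ih n hn h'
          _ ≤ δ * (δ * (w (k + 1) / ((k : ℝ) + 1))) := by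
              have := hw2 k hk1
              nlinarith
          _ ≤ δ * (w (k + 1) / ((k : ℝ) + 1)) := by
              nlinarith [mul_nonneg hδ0.le hpos]
      · subst h'; exact hw2 n hn
  intro j hj
  have hjpos : (0 : ℝ) < (j : ℝ) := by exact_mod_cast (by omega : 0 < j)
  have hwj : 0 ≤ w j / (j : ℝ) := le_trans zero_le_one (hw1 j (by omega))
  have step : ∑ n ∈ Finset.Ico 1 j, w n * b n j
      ≤ ∑ n ∈ Finset.Ico 1 j, δ * (w j / (j : ℝ)) * ((n : ℝ) * b n j) := by
    apply Finset.sum_le_sum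
    intro n hn
    rw [Finset.mem_Ico] at hn
    have hnpos : (0 : ℝ) < (n : ℝ) := by exact_mod_cast hn.1
    have hk := key j n hn.1 hn.2
    have hwn : w n * b n j = (w n / (n : ℝ)) * ((n : ℝ) * b n j) := by
      field_simp
    have hmul := mul_le_mul_of_nonneg_right hk (mul_nonneg hnpos.le (hb_nonneg n j))
    linarith [hmul, hwn.le, hwn.ge]
  rw [← Finset.mul_sum] at step
  have hmj := hmass j hj
  calc ∑ n ∈ Finset.Ico 1 j, w n * b n j
      ≤ δ * (w j / (j : ℝ)) * ∑ n ∈ Finset.Ico 1 j, (n : ℝ) * b n j := step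
    _ ≤ δ * (w j / (j : ℝ)) * (j : ℝ) := by
        apply mul_le_mul_of_nonneg_left hmj
        positivity
    _ = δ * w j := by field_simp
end

section
/- Let b_{n,j} ≥ 0 with b_{n,j} = 0 for n ≥ j satisfy ∑_{n=1}^{j-1} n·b_{n,j} ≤ j for all j ≥ 2, and let r > 2. Then the weight w_n = r^n satisfies w_n ≥ n for all n ≥ 1 and ∑_{n=1}^{j-1} r^n·b_{n,j} ≤ (2/r)·r^j for all j ≥ 2. -/
lemma aux_geom (r : ℝ) (hr : 2 < r) (n k : ℕ) (hn : 1 ≤ n) :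
    r ^ n * (n + k : ℕ) ≤ (n : ℝ) * r ^ (n + k) := by
  have hr0 : (0 : ℝ) < r := by linarith
  induction k with
  | zero => simp [mul_comm]
  | succ k ih =>
    have h1 : (1 : ℝ) ≤ r ^ n := one_le_pow₀ (by linarith)
    have h2 : r ^ n ≤ r ^ (n + k) := pow_le_pow_right₀ (by linarith) (Nat.le_add_right _ _)
    have h3 : r ^ n * ((n : ℝ) + k + 1) ≤ (n : ℝ) * r ^ (n + k) + r ^ (n + k) := by
      push_cast at ih ⊢
      nlinarith
    have h4 : ((n : ℝ) + 1) * r ^ (n + k) ≤ (n : ℝ) * r ^ (n + k + 1) := by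
      have hp : (0 : ℝ) < r ^ (n + k) := pow_pos hr0 _
      have : ((n : ℝ) + 1) ≤ (n : ℝ) * r := by
        have : (1 : ℝ) ≤ (n : ℝ) := by exact_mod_cast hn
        nlinarith
      calc ((n : ℝ) + 1) * r ^ (n + k) ≤ ((n : ℝ) * r) * r ^ (n + k) := by nlinarith
        _ = (n : ℝ) * r ^ (n + k + 1) := by ring
    push_cast
    push_cast at h3 h4
    calc r ^ n * ((n : ℝ) + (k + 1)) = r ^ n * ((n : ℝ) + k + 1) := by ring
      _ ≤ (n : ℝ) * r ^ (n + k) + r ^ (n + k) := h3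
      _ = ((n : ℝ) + 1) * r ^ (n + k) := by ring
      _ ≤ (n : ℝ) * r ^ (n + k + 1) := h4

/-- If no mass is gained in fragmentation events, then for any `r > 2` the geometric
weight `w_n = r^n` satisfies `w_n ≥ n` and the contractivity condition with
constant `κ = 2/r`. -/
theorem stmt_7 (b : ℕ → ℕ → ℝ) (r : ℝ)
    (hb_nonneg : ∀ n j : ℕ, 0 ≤ b n j)
    (hb_zero : ∀ n j : ℕ, j ≤ n → b n j = 0)
    (hmass : ∀ j : ℕ, 2 ≤ j → ∑ n ∈ Finset.Ico 1 j, (n : ℝ) * b n j ≤ (j : ℝ))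
    (hr : 2 < r) :
    (∀ n : ℕ, 1 ≤ n → (n : ℝ) ≤ r ^ n) ∧
    (∀ j : ℕ, 2 ≤ j → ∑ n ∈ Finset.Ico 1 j, r ^ n * b n j ≤ (2 / r) * r ^ j) := by
  have hr0 : (0 : ℝ) < r := by linarith
  constructor
  · intro n hn
    have h1 : (n : ℝ) < 2 ^ n := by exact_mod_cast (Nat.lt_two_pow_self (n := n))
    have h2 : (2 : ℝ) ^ n ≤ r ^ n := pow_le_pow_left₀ (by norm_num) (le_of_lt hr) n
    linarith
  · intro j hj
    set J := j - 1 with hJ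
    have hjJ : j = J + 1 := by omega
    have hJ1 : 1 ≤ J := by omega
    have hJpos : (0 : ℝ) < (J : ℝ) := by exact_mod_cast Nat.lt_of_lt_of_le Nat.zero_lt_one hJ1
    have hpJ : (0 : ℝ) < r ^ J := pow_pos hr0 _
    -- pointwise bound
    have key : ∀ n ∈ Finset.Ico 1 j, r ^ n * b n j ≤ ((n : ℝ) * r ^ J / J) * b n j := by
      intro n hn
      simp only [Finset.mem_Ico] at hn
      have hnJ : n ≤ J := by omega
      have := aux_geom r hr n (J - n) hn.1
      have hnk : n + (J - n) = J := by omega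
      rw [hnk] at this
      have hJcast : ((J : ℕ) : ℝ) = (J : ℝ) := rfl
      have hle : r ^ n ≤ (n : ℝ) * r ^ J / J := by
        rw [le_div_iff₀ hJpos]
        nlinarith [this]
      exact mul_le_mul_of_nonneg_right hle (hb_nonneg n j)
    calc ∑ n ∈ Finset.Ico 1 j, r ^ n * b n j
        ≤ ∑ n ∈ Finset.Ico 1 j, ((n : ℝ) * r ^ J / J) * b n j := Finset.sum_le_sum key
      _ = (r ^ J / J) * ∑ n ∈ Finset.Ico 1 j, (n : ℝ) * b n j := by
          rw [Finset.mul_sum]; apply Finset.sum_congr rfl; intro n _; ring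
      _ ≤ (r ^ J / J) * j := by
          apply mul_le_mul_of_nonneg_left (hmass j hj) (le_of_lt (div_pos hpJ hJpos))
      _ ≤ 2 * r ^ J := by
          rw [div_mul_eq_mul_div, div_le_iff₀ hJpos]
          have : (j : ℝ) ≤ 2 * J := by
            have : j ≤ 2 * J := by omega
            exact_mod_cast this
          nlinarith
      _ = (2 / r) * r ^ j := by
          rw [hjJ]
          field_simp
          ring
end

section
/- For every λ > 0 define g_n = 1/((λ+n−1)·(λ+n)·(λ+n+1)) for n ≥ 1. Then ∑_{n=1}^∞ n·g_n < ∞, and for every n ≥ 1 the series ∑_{j=n+1}^∞ g_j converges with −(n−1)·g_n + 2·∑_{j=n+1}^∞ g_j = λ·g_n. -/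
open Filter Finset

lemma alg_split (X : ℝ) (hX : 0 < X) :
    1 / (X * (X + 1) * (X + 2)) = 1 / 2 / (X * (X + 1)) - 1 / 2 / ((X + 1) * (X + 2)) := by
  have h1 : X ≠ 0 := hX.ne'
  have h2 : X + 1 ≠ 0 := by positivity
  have h3 : X + 2 ≠ 0 := by positivity
  field_simp
  ring

lemma tele_hasSum (l : ℝ) (hl : 0 < l) (n : ℕ) (hn : 1 ≤ n) :
    HasSum (fun k : ℕ => 1 / ((l + ((n + 1 + k : ℕ) : ℝ) - 1) * (l + ((n + 1 + k : ℕ) : ℝ)) *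
        (l + ((n + 1 + k : ℕ) : ℝ) + 1)))
      ((1 / 2) / ((l + n) * (l + n + 1))) := by
  set f : ℕ → ℝ := fun k => 1 / 2 / ((l + n + k) * (l + n + k + 1)) with hf
  have hpos : ∀ k : ℕ, (0:ℝ) < l + n + k := fun k => by positivity
  have key : ∀ k : ℕ, 1 / ((l + ((n + 1 + k : ℕ) : ℝ) - 1) * (l + ((n + 1 + k : ℕ) : ℝ)) *
      (l + ((n + 1 + k : ℕ) : ℝ) + 1)) = f k - f (k + 1) := by
    intro k
    have d1 : (l + ((n + 1 + k : ℕ) : ℝ) - 1) * (l + ((n + 1 + k : ℕ) : ℝ)) *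
        (l + ((n + 1 + k : ℕ) : ℝ) + 1)
        = (l + n + k) * ((l + n + k) + 1) * ((l + n + k) + 2) := by push_cast; ring
    have d2 : (l + (n:ℝ) + ((k + 1 : ℕ):ℝ)) * (l + (n:ℝ) + ((k + 1 : ℕ):ℝ) + 1)
        = ((l + n + k) + 1) * ((l + n + k) + 2) := by push_cast; ring
    rw [d1, alg_split _ (hpos k), hf]
    simp only [d2]
  have hnn : ∀ k : ℕ, (0:ℝ) ≤ 1 / ((l + ((n + 1 + k : ℕ) : ℝ) - 1) * (l + ((n + 1 + k : ℕ) : ℝ)) *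
      (l + ((n + 1 + k : ℕ) : ℝ) + 1)) := by
    intro k
    have h0 := hpos k
    have h1 : (0:ℝ) < l + ((n + 1 + k : ℕ) : ℝ) - 1 := by push_cast; linarith
    have h2 : (0:ℝ) < l + ((n + 1 + k : ℕ) : ℝ) := by push_cast; linarith
    positivity
  rw [hasSum_iff_tendsto_nat_of_nonneg hnn]
  have hsum : ∀ N : ℕ, ∑ k ∈ range N, (1 / ((l + ((n + 1 + k : ℕ) : ℝ) - 1) *
      (l + ((n + 1 + k : ℕ) : ℝ)) * (l + ((n + 1 + k : ℕ) : ℝ) + 1))) = f 0 - f N := by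
    intro N
    calc _ = ∑ k ∈ range N, (f k - f (k+1)) := sum_congr rfl fun k _ => key k
    _ = f 0 - f N := by rw [← sum_range_sub' f N]
  simp only [hsum]
  have htend : Tendsto f atTop (nhds 0) := by
    rw [hf]
    have h1 : Tendsto (fun k : ℕ => (l + n + k) * (l + n + k + 1)) atTop atTop := by
      apply Tendsto.atTop_mul_atTop₀
      · exact tendsto_atTop_add_const_left _ _ tendsto_natCast_atTop_atTop
      · exact tendsto_atTop_add_const_right _ _
          (tendsto_atTop_add_const_left _ _ tendsto_natCast_atTop_atTop)
    simpa using (tendsto_const_nhds.div_atTop h1 :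
      Tendsto (fun k : ℕ => (1/2 : ℝ) / _) atTop (nhds 0))
  have h := (tendsto_const_nhds (x := f 0)).sub htend
  rw [sub_zero] at h
  simpa [hf] using h

set_option maxHeartbeats 1000000 in
/-- For every `λ > 0`, the sequence `g_n = 1/((λ+n−1)(λ+n)(λ+n+1))` lies in
`X_{[1]}` (i.e. `∑ n g_n < ∞`) and is an eigenvector with eigenvalue `λ` of the
maximal random-scission operator: `−(n−1) g_n + 2 ∑_{j=n+1}^∞ g_j = λ g_n`. -/
theorem stmt_9 (l : ℝ) (hl : 0 < l) (g : ℕ → ℝ)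
    (hg : ∀ n : ℕ, 1 ≤ n →
      g n = 1 / ((l + (n : ℝ) - 1) * (l + (n : ℝ)) * (l + (n : ℝ) + 1))) :
    Summable (fun n : ℕ => ((n : ℝ) + 1) * g (n + 1)) ∧
    ∀ n : ℕ, 1 ≤ n →
      Summable (fun k : ℕ => g (n + 1 + k)) ∧
      -(((n : ℝ) - 1) * g n) + 2 * ∑' k : ℕ, g (n + 1 + k) = l * g n := by
  constructor
  · rw [← summable_nat_add_iff 1]
    apply Summable.of_nonneg_of_le (f := fun n : ℕ => (1:ℝ) / ((n:ℝ)+1)^2)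
    · intro n
      have hn : (0:ℝ) ≤ (n:ℝ) := Nat.cast_nonneg n
      have h1 : (0:ℝ) < l + ((n+1+1:ℕ):ℝ) - 1 := by push_cast; linarith
      have h2 : (0:ℝ) < l + ((n+1+1:ℕ):ℝ) := by push_cast; linarith
      rw [hg (n+1+1) (by omega)]
      positivity
    · intro n
      rw [hg (n+1+1) (by omega)]
      have hn : (0:ℝ) ≤ (n:ℝ) := Nat.cast_nonneg n
      push_cast
      have h1 : (0:ℝ) < l + ((n:ℝ)+1+1) - 1 := by linarith
      have h2 : (0:ℝ) < l + ((n:ℝ)+1+1) := by linarith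
      have h3 : (0:ℝ) < l + ((n:ℝ)+1+1) + 1 := by linarith
      rw [mul_one_div, div_le_div_iff₀ (by positivity) (by positivity), one_mul]
      nlinarith [sq_nonneg ((n:ℝ)+1), sq_nonneg l, mul_pos h1 h2, mul_nonneg hn hn,
        mul_nonneg (mul_nonneg hn hn) hn, mul_nonneg hn hl.le,
        mul_nonneg (mul_nonneg hn hn) hl.le, mul_nonneg hn (mul_nonneg hl.le hl.le)]
    · have h2 : Summable (fun n : ℕ => (1:ℝ) / (n:ℝ)^2) := by
        rw [Real.summable_one_div_nat_pow]; omega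
      simpa using (summable_nat_add_iff 1).mpr h2
  · intro n hn
    have key := tele_hasSum l hl n hn
    have heq : (fun k : ℕ => g (n + 1 + k)) = fun k : ℕ =>
        1 / ((l + ((n + 1 + k : ℕ) : ℝ) - 1) * (l + ((n + 1 + k : ℕ) : ℝ)) *
        (l + ((n + 1 + k : ℕ) : ℝ) + 1)) := by
      funext k; exact hg (n+1+k) (by omega)
    rw [heq]
    refine ⟨key.summable, ?_⟩
    rw [key.tsum_eq, hg n hn]
    have hnr : (1:ℝ) ≤ (n:ℝ) := by exact_mod_cast hn
    have h1 : (0:ℝ) < l + (n:ℝ) - 1 := by linarith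
    have h2 : (0:ℝ) < l + (n:ℝ) := by linarith
    have h3 : (0:ℝ) < l + (n:ℝ) + 1 := by linarith
    field_simp
    ring
end

section
/- Let a_n ≥ 0, let b_{n,j} ≥ 0 with b_{n,j} = 0 for n ≥ j, let w = (w_n)_{n≥1} satisfy w_n ≥ n and ∑_{n=1}^{j-1} w_n·b_{n,j} ≤ κ·w_j for all j ≥ 2 with κ ∈ (0,1), and set a₀ = inf_{n≥1} a_n. Then for every sequence f = (f_n)_{n≥1} with f_n ≥ 0 for all n, ∑_{n=1}^∞ w_n·f_n < ∞ and ∑_{n=1}^∞ w_n·a_n·f_n < ∞, one has ∑_{n=1}^∞ w_n·(−a_n·f_n + ∑_{j=n+1}^∞ a_j·b_{n,j}·f_j) ≤ −(1−κ)·a₀·∑_{n=1}^∞ w_n·f_n. -/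
/-- With `a₀ = inf_{n≥1} a_n` and strict contractivity constant `κ < 1`, the weighted
total of the fragmentation vector field satisfies
`∑ w_n (−a_n f_n + ∑_{j>n} a_j b_{n,j} f_j) ≤ −(1−κ) a₀ ∑ w_n f_n` for nonnegative `f`. -/
theorem stmt_13 (a : ℕ → ℝ) (b : ℕ → ℕ → ℝ) (w : ℕ → ℝ) (κ : ℝ)
    (ha : ∀ n : ℕ, 1 ≤ n → 0 ≤ a n)
    (hb_nonneg : ∀ n j : ℕ, 0 ≤ b n j)
    (hb_zero : ∀ n j : ℕ, j ≤ n → b n j = 0)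
    (hw : ∀ n : ℕ, 1 ≤ n → (n : ℝ) ≤ w n)
    (hκ0 : 0 < κ) (hκ1 : κ < 1)
    (hcond : ∀ j : ℕ, 2 ≤ j → ∑ n ∈ Finset.Ico 1 j, w n * b n j ≤ κ * w j)
    (f : ℕ → ℝ) (hf : ∀ n : ℕ, 1 ≤ n → 0 ≤ f n)
    (hsum1 : Summable (fun n : ℕ => w (n + 1) * f (n + 1)))
    (hsum2 : Summable (fun n : ℕ => w (n + 1) * a (n + 1) * f (n + 1))) :
    ∑' n : ℕ, w (n + 1) *
      (-(a (n + 1) * f (n + 1)) +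
        ∑' k : ℕ, a (n + 2 + k) * b (n + 1) (n + 2 + k) * f (n + 2 + k))
      ≤ -(1 - κ) * (⨅ n : ℕ, a (n + 1)) * ∑' n : ℕ, w (n + 1) * f (n + 1) := by
  have hw_pos : ∀ n : ℕ, 1 ≤ n → 0 < w n := fun n hn =>
    lt_of_lt_of_le (by exact_mod_cast Nat.lt_of_lt_of_le Nat.zero_lt_one hn) (hw n hn)
  set q : ℕ → ℝ := fun n => w (n + 1) * a (n + 1) * f (n + 1) with hq
  have hq_nonneg : ∀ n, 0 ≤ q n := fun n =>
    mul_nonneg (mul_nonneg (hw_pos _ (by omega)).le (ha _ (by omega))) (hf _ (by omega))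
  set T : ℝ := ∑' n, q n with hT
  set S : ℝ := ∑' n : ℕ, w (n + 1) * f (n + 1) with hS
  have hT_nonneg : 0 ≤ T := tsum_nonneg hq_nonneg
  set H : ℕ → ℕ → ℝ := fun n j => w (n + 1) * (a j * b (n + 1) j * f j) with hHdef
  have hH_nonneg : ∀ n j, 0 ≤ H n j := by
    intro n j
    rcases Nat.eq_zero_or_pos j with rfl | hj
    · simp [hHdef, hb_zero (n + 1) 0 (by omega)]
    · exact mul_nonneg (hw_pos _ (by omega)).le
        (mul_nonneg (mul_nonneg (ha j hj) (hb_nonneg _ _)) (hf j hj))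
  -- finite column bound on weights
  have hc : ∀ j : ℕ, 1 ≤ j → ∀ N : ℕ,
      ∑ n ∈ Finset.range N, w (n + 1) * b (n + 1) j ≤ κ * w j := by
    intro j hj N
    have h1 : ∑ n ∈ Finset.range N, w (n + 1) * b (n + 1) j
        = ∑ m ∈ Finset.Ico 1 (N + 1), w m * b m j := by
      rw [Finset.sum_Ico_eq_sum_range]
      simp [add_comm]
    have h2 : ∑ m ∈ Finset.Ico 1 (N + 1), w m * b m j
        ≤ ∑ m ∈ Finset.Ico 1 (N + 1 + j), w m * b m j := by
      apply Finset.sum_le_sum_of_subset_of_nonneg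
        (Finset.Ico_subset_Ico le_rfl (by omega))
      intro m hm _
      exact mul_nonneg (hw_pos m (Finset.mem_Ico.mp hm).1).le (hb_nonneg m j)
    have h3 : ∑ m ∈ Finset.Ico 1 (N + 1 + j), w m * b m j
        = ∑ m ∈ Finset.Ico 1 j, w m * b m j := by
      symm
      apply Finset.sum_subset (Finset.Ico_subset_Ico le_rfl (by omega))
      intro m hm hm'
      have : j ≤ m := by simp only [Finset.mem_Ico] at hm hm'; omega
      simp [hb_zero m j this]
    have h4 : ∑ m ∈ Finset.Ico 1 j, w m * b m j ≤ κ * w j := by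
      rcases Nat.lt_or_ge j 2 with hj2 | hj2
      · interval_cases j
        simp [mul_nonneg hκ0.le (hw_pos 1 le_rfl).le]
      · exact hcond j hj2
    calc ∑ n ∈ Finset.range N, w (n + 1) * b (n + 1) j
        = ∑ m ∈ Finset.Ico 1 (N + 1), w m * b m j := h1
      _ ≤ ∑ m ∈ Finset.Ico 1 (N + 1 + j), w m * b m j := h2
      _ = ∑ m ∈ Finset.Ico 1 j, w m * b m j := h3
      _ ≤ κ * w j := h4
  -- column bound
  have hZ : ∀ j : ℕ, ∀ N : ℕ,
      ∑ n ∈ Finset.range N, H n j ≤ (if j = 0 then 0 else κ * q (j - 1)) := by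
    intro j N
    rcases Nat.eq_zero_or_pos j with rfl | hj
    · simp [hHdef, hb_zero _ 0 (by omega)]
    · have hrw : ∀ n, H n j = (a j * f j) * (w (n + 1) * b (n + 1) j) := by
        intro n; simp only [hHdef]; ring
      have : ∑ n ∈ Finset.range N, H n j
          = (a j * f j) * ∑ n ∈ Finset.range N, w (n + 1) * b (n + 1) j := by
        rw [Finset.mul_sum]; exact Finset.sum_congr rfl fun n _ => hrw n
      rw [this]
      have haf : 0 ≤ a j * f j := mul_nonneg (ha j hj) (hf j hj)
      have := mul_le_mul_of_nonneg_left (hc j hj N) haf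
      rw [if_neg (by omega)]
      refine this.trans_eq ?_
      have hj1 : j - 1 + 1 = j := by omega
      simp only [hq, hj1]; ring
    -- summability of dominating column series
  have hZsum : Summable (fun j : ℕ => if j = 0 then (0:ℝ) else κ * q (j - 1)) := by
    rw [← summable_nat_add_iff 1]
    simpa using (hsum2.mul_left κ)
  have hZtsum : ∑' j : ℕ, (if j = 0 then (0:ℝ) else κ * q (j - 1)) = κ * T := by
    rw [Summable.tsum_eq_zero_add hZsum]
    simp [hT, tsum_mul_left]
  -- summability of the double family
  have hA : Summable (Function.uncurry fun n j => H n j) := by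
    apply summable_of_sum_le (c := κ * T)
    · intro p; exact hH_nonneg p.1 p.2
    · intro u
      set N := (u.sup fun p => max p.1 p.2) + 1 with hN
      have hsub : u ⊆ Finset.range N ×ˢ Finset.range N := by
        intro p hp
        simp only [Finset.mem_product, Finset.mem_range, hN]
        constructor
        · exact Nat.lt_succ_of_le ((le_max_left _ _).trans
            (Finset.le_sup (f := fun p : ℕ × ℕ => max p.1 p.2) hp))
        · exact Nat.lt_succ_of_le ((le_max_right _ _).trans
            (Finset.le_sup (f := fun p : ℕ × ℕ => max p.1 p.2) hp))
      calc ∑ p ∈ u, Function.uncurry (fun n j => H n j) p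
          ≤ ∑ p ∈ Finset.range N ×ˢ Finset.range N,
              Function.uncurry (fun n j => H n j) p := by
            apply Finset.sum_le_sum_of_subset_of_nonneg hsub
            intro p _ _; exact hH_nonneg p.1 p.2
        _ = ∑ j ∈ Finset.range N, ∑ n ∈ Finset.range N, H n j := by
            rw [Finset.sum_product]; exact Finset.sum_comm
        _ ≤ ∑ j ∈ Finset.range N, (if j = 0 then 0 else κ * q (j - 1)) :=
            Finset.sum_le_sum fun j _ => hZ j N
        _ ≤ κ * T := by
            refine Summable.sum_le_tsum _ (fun j _ => ?_) hZsum |>.trans_eq hZtsum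
            rcases Nat.eq_zero_or_pos j with rfl | hj
            · simp
            · rw [if_neg (by omega)]
              exact mul_nonneg hκ0.le (hq_nonneg _)
  -- identify rows with the inner tsums of the goal
  have hrow : ∀ n : ℕ, (w (n + 1) *
      ∑' k : ℕ, a (n + 2 + k) * b (n + 1) (n + 2 + k) * f (n + 2 + k))
      = ∑' j : ℕ, H n j := by
    intro n
    have hinj : Function.Injective (fun k : ℕ => n + 2 + k) := fun x y h => by
      simpa using h
    have hsupp : Function.support (fun j => a j * b (n + 1) j * f j)
        ⊆ Set.range (fun k : ℕ => n + 2 + k) := by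
      intro j hj
      by_contra hr
      have hj2 : j < n + 2 := by
        by_contra h
        exact hr ⟨j - (n + 2), by show n + 2 + (j - (n + 2)) = j; omega⟩
      exact hj (by simp [hb_zero (n + 1) j (by omega)])
    have := hinj.tsum_eq hsupp
    rw [this, ← tsum_mul_left]
  -- summability of rows and marginals
  have hVsum : Summable (fun n : ℕ => ∑' j : ℕ, H n j) := hA.prod
  have hswap : ∑' (n : ℕ) (j : ℕ), H n j = ∑' (j : ℕ) (n : ℕ), H n j :=
    (Summable.tsum_comm (f := fun n j => H n j) hA).symm
  -- each column tsum is a finite sum, bounded by the dominating series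
  have hcol : ∀ j : ℕ, ∑' n : ℕ, H n j ≤ (if j = 0 then 0 else κ * q (j - 1)) := by
    intro j
    have hfin : ∀ n ∉ Finset.range j, H n j = 0 := by
      intro n hn
      simp only [Finset.mem_range, not_lt] at hn
      simp [hHdef, hb_zero (n + 1) j (by omega)]
    rw [tsum_eq_sum hfin]
    exact hZ j j
  have hcolsum : Summable (fun j : ℕ => ∑' n : ℕ, H n j) := hA.prod_symm.prod
  have hV : ∑' (n : ℕ) (j : ℕ), H n j ≤ κ * T := by
    rw [hswap, ← hZtsum]
    exact Summable.tsum_le_tsum hcol hcolsum hZsum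
  -- rewrite the LHS
  have hLHS : (∑' n : ℕ, w (n + 1) *
      (-(a (n + 1) * f (n + 1)) +
        ∑' k : ℕ, a (n + 2 + k) * b (n + 1) (n + 2 + k) * f (n + 2 + k)))
      = -T + ∑' (n : ℕ) (j : ℕ), H n j := by
    have hterm : ∀ n : ℕ, w (n + 1) *
        (-(a (n + 1) * f (n + 1)) +
          ∑' k : ℕ, a (n + 2 + k) * b (n + 1) (n + 2 + k) * f (n + 2 + k))
        = -q n + ∑' j : ℕ, H n j := by
      intro n
      rw [mul_add, ← hrow n]
      simp only [hq]; ring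
    rw [tsum_congr hterm, Summable.tsum_add (hsum2.neg) hVsum, tsum_neg]
  rw [hLHS]
  -- the infimum
  set a₀ : ℝ := ⨅ n : ℕ, a (n + 1) with ha₀
  have hbdd : BddBelow (Set.range fun n : ℕ => a (n + 1)) :=
    ⟨0, by rintro x ⟨n, rfl⟩; exact ha _ (by omega)⟩
  have ha₀_nonneg : 0 ≤ a₀ := le_ciInf fun n => ha _ (by omega)
  have ha₀_le : ∀ n : ℕ, a₀ ≤ a (n + 1) := fun n => ciInf_le hbdd n
  have hTS : a₀ * S ≤ T := by
    rw [hS, ← tsum_mul_left]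
    refine Summable.tsum_le_tsum (fun n => ?_) (hsum1.mul_left a₀) hsum2
    have hwf : 0 ≤ w (n + 1) * f (n + 1) :=
      mul_nonneg (hw_pos _ (by omega)).le (hf _ (by omega))
    calc a₀ * (w (n + 1) * f (n + 1)) ≤ a (n + 1) * (w (n + 1) * f (n + 1)) :=
          mul_le_mul_of_nonneg_right (ha₀_le n) hwf
      _ = q n := by simp only [hq]; ring
  calc -T + ∑' (n : ℕ) (j : ℕ), H n j ≤ -T + κ * T := by linarith
    _ = -(1 - κ) * T := by ring
    _ ≤ -(1 - κ) * (a₀ * S) := by nlinarith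
    _ = -(1 - κ) * a₀ * S := by ring
end

section
/- Let a_n ≥ 0, let b_{n,j} ≥ 0 with b_{n,j} = 0 for n ≥ j, let w_n > 0 satisfy ∑_{n=1}^{j-1} w_n·b_{n,j} ≤ κ·w_j for all j ≥ 2 with κ ∈ (0,1], and let α > 0. Then for every sequence f = (f_n)_{n≥1} with f_n ≥ 0 for all n and ∑_{n=1}^∞ w_n·f_n < ∞, one has ∫₀^α ∑_{n=1}^∞ w_n·(∑_{j=n+1}^∞ a_j·b_{n,j}·e^{−a_j t}·f_j) dt ≤ κ·∑_{n=1}^∞ w_n·f_n. -/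
open MeasureTheory

lemma aux_ofReal_tsum_le {f : ℕ → ℝ} (hf : ∀ n, 0 ≤ f n) :
    ENNReal.ofReal (∑' n, f n) ≤ ∑' n, ENNReal.ofReal (f n) := by
  by_cases h : Summable f
  · rw [ENNReal.ofReal_tsum_of_nonneg hf h]
  · rw [tsum_eq_zero_of_not_summable h]; simp

lemma aux_exp_integral (A α : ℝ) (hα : 0 ≤ α) :
    ∫ t in (0:ℝ)..α, A * Real.exp (-A * t) = 1 - Real.exp (-A * α) := by
  have hD : ∀ t ∈ Set.uIcc (0:ℝ) α, HasDerivAt (fun s => -Real.exp (-A * s))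
      (A * Real.exp (-A * t)) t := by
    intro t _
    have h1 : HasDerivAt (fun s : ℝ => -A * s) (-A) t := by
      simpa using (hasDerivAt_id t).const_mul (-A)
    have h2 := (Real.hasDerivAt_exp (-A * t)).comp t h1
    have h3 := h2.neg
    exact h3.congr_deriv (by ring)
  have hI : IntervalIntegrable (fun t => A * Real.exp (-A * t)) volume 0 α :=
    (Continuous.intervalIntegrable (by continuity) 0 α)
  have := intervalIntegral.integral_eq_sub_of_hasDerivAt hD hI
  rw [this]; simp [mul_comm]; ring

lemma aux_lint (c A α : ℝ) (hc : 0 ≤ c) (hA : 0 ≤ A) (hα : 0 ≤ α) :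
    ∫⁻ t in Set.Ioc (0:ℝ) α, ENNReal.ofReal (c * (A * Real.exp (-A * t)))
      ≤ ENNReal.ofReal c := by
  have hcont : Continuous (fun t : ℝ => c * (A * Real.exp (-A * t))) := by continuity
  have hint : IntegrableOn (fun t : ℝ => c * (A * Real.exp (-A * t))) (Set.Ioc 0 α) volume :=
    hcont.integrableOn_Ioc
  have hnn : 0 ≤ᵐ[volume.restrict (Set.Ioc (0:ℝ) α)]
      (fun t : ℝ => c * (A * Real.exp (-A * t))) :=
    Filter.Eventually.of_forall fun t => mul_nonneg hc (mul_nonneg hA (Real.exp_nonneg _))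
  rw [← ofReal_integral_eq_lintegral_ofReal hint hnn]
  apply ENNReal.ofReal_le_ofReal
  rw [← intervalIntegral.integral_of_le hα, intervalIntegral.integral_const_mul,
    aux_exp_integral A α hα]
  have h1 : 1 - Real.exp (-A * α) ≤ 1 := by
    have := Real.exp_nonneg (-A * α); linarith
  exact mul_le_of_le_one_right hc h1

/-- The Miyadera-type integral bound
`∫₀^α ‖B^{(w)} T^{(w)}(t) f‖_w dt ≤ κ ‖f‖_w` for nonnegative `f ∈ ℓ¹_w`, where
`(T^{(w)}(t) f)_n = e^{−a_n t} f_n`. -/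
theorem stmt_15 (a : ℕ → ℝ) (b : ℕ → ℕ → ℝ) (w : ℕ → ℝ) (κ α : ℝ)
    (ha : ∀ n : ℕ, 1 ≤ n → 0 ≤ a n)
    (hb_nonneg : ∀ n j : ℕ, 0 ≤ b n j)
    (hb_zero : ∀ n j : ℕ, j ≤ n → b n j = 0)
    (hw_pos : ∀ n : ℕ, 1 ≤ n → 0 < w n)
    (hκ0 : 0 < κ) (hκ1 : κ ≤ 1)
    (hcond : ∀ j : ℕ, 2 ≤ j → ∑ n ∈ Finset.Ico 1 j, w n * b n j ≤ κ * w j)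
    (hα : 0 < α)
    (f : ℕ → ℝ) (hf : ∀ n : ℕ, 1 ≤ n → 0 ≤ f n)
    (hsum : Summable (fun n : ℕ => w (n + 1) * f (n + 1))) :
    ∫ t in (0 : ℝ)..α,
      ∑' n : ℕ, w (n + 1) *
        ∑' k : ℕ, a (n + 2 + k) * b (n + 1) (n + 2 + k) *
          Real.exp (-a (n + 2 + k) * t) * f (n + 2 + k)
      ≤ κ * ∑' n : ℕ, w (n + 1) * f (n + 1) := by
  set S : ℝ := ∑' n : ℕ, w (n + 1) * f (n + 1) with hS_def
  have hS0 : 0 ≤ S :=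
    tsum_nonneg fun n => mul_nonneg (hw_pos _ (by omega)).le (hf _ (by omega))
  have hRHS : 0 ≤ κ * S := mul_nonneg hκ0.le hS0
  -- the inner terms
  set u : ℕ → ℕ → ℝ → ℝ := fun n k t =>
    a (n + 2 + k) * b (n + 1) (n + 2 + k) * Real.exp (-a (n + 2 + k) * t) * f (n + 2 + k)
    with hu_def
  have hu_nonneg : ∀ n k t, 0 ≤ u n k t := fun n k t =>
    mul_nonneg (mul_nonneg (mul_nonneg (ha _ (by omega)) (hb_nonneg _ _))
      (Real.exp_nonneg _)) (hf _ (by omega))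
  set g : ℝ → ℝ := fun t => ∑' n : ℕ, w (n + 1) * ∑' k : ℕ, u n k t with hg_def
  have hg_nonneg : ∀ t, 0 ≤ g t := fun t =>
    tsum_nonneg fun n => mul_nonneg (hw_pos _ (by omega)).le
      (tsum_nonneg fun k => hu_nonneg n k t)
  -- the coefficient array
  set C : ℕ × ℕ → ℝ := fun p =>
    w (p.1 + 1) * b (p.1 + 1) (p.1 + 2 + p.2) * f (p.1 + 2 + p.2) with hC_def
  have hC_nonneg : ∀ p, 0 ≤ C p := fun p =>
    mul_nonneg (mul_nonneg (hw_pos _ (by omega)).le (hb_nonneg _ _)) (hf _ (by omega))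
  -- Step A: pointwise bound
  have stepA : ∀ t : ℝ, ENNReal.ofReal (g t) ≤
      ∑' p : ℕ × ℕ, ENNReal.ofReal (w (p.1 + 1) * u p.1 p.2 t) := by
    intro t
    calc ENNReal.ofReal (g t)
        ≤ ∑' n : ℕ, ENNReal.ofReal (w (n + 1) * ∑' k : ℕ, u n k t) :=
          aux_ofReal_tsum_le fun n => mul_nonneg (hw_pos _ (by omega)).le
            (tsum_nonneg fun k => hu_nonneg n k t)
      _ ≤ ∑' n : ℕ, ∑' k : ℕ, ENNReal.ofReal (w (n + 1) * u n k t) := by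
          refine ENNReal.tsum_le_tsum fun n => ?_
          rw [ENNReal.ofReal_mul (hw_pos _ (by omega)).le]
          calc ENNReal.ofReal (w (n + 1)) * ENNReal.ofReal (∑' k : ℕ, u n k t)
              ≤ ENNReal.ofReal (w (n + 1)) * ∑' k : ℕ, ENNReal.ofReal (u n k t) :=
                mul_le_mul_right (aux_ofReal_tsum_le fun k => hu_nonneg n k t) _
            _ = ∑' k : ℕ, ENNReal.ofReal (w (n + 1)) * ENNReal.ofReal (u n k t) :=
                ENNReal.tsum_mul_left.symm
            _ = ∑' k : ℕ, ENNReal.ofReal (w (n + 1) * u n k t) := by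
                refine tsum_congr fun k => ?_
                rw [ENNReal.ofReal_mul (hw_pos _ (by omega)).le]
      _ = ∑' p : ℕ × ℕ, ENNReal.ofReal (w (p.1 + 1) * u p.1 p.2 t) :=
          (ENNReal.tsum_prod' (f := fun p : ℕ × ℕ =>
            ENNReal.ofReal (w (p.1 + 1) * u p.1 p.2 t))).symm
  -- Step C: per-pair integral bound
  have stepC : ∀ p : ℕ × ℕ,
      ∫⁻ t in Set.Ioc (0:ℝ) α, ENNReal.ofReal (w (p.1 + 1) * u p.1 p.2 t)
        ≤ ENNReal.ofReal (C p) := by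
    intro p
    have heq : (fun t : ℝ => ENNReal.ofReal (w (p.1 + 1) * u p.1 p.2 t)) =
        fun t : ℝ => ENNReal.ofReal
          (C p * (a (p.1 + 2 + p.2) * Real.exp (-a (p.1 + 2 + p.2) * t))) := by
      funext t
      congr 1
      simp only [hu_def, hC_def]
      ring
    rw [heq]
    exact aux_lint _ _ _ (hC_nonneg p) (ha _ (by omega)) hα.le
  -- Step D: sum of coefficients bound
  have stepD : ∑' p : ℕ × ℕ, ENNReal.ofReal (C p) ≤ ENNReal.ofReal (κ * S) := by
    set H : ℕ → ℕ → ENNReal := fun n j =>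
      ENNReal.ofReal (w (n + 1) * b (n + 1) j * f j) with hH_def
    have h1 : ∑' p : ℕ × ℕ, ENNReal.ofReal (C p) = ∑' n : ℕ, ∑' k : ℕ, H n (n + 2 + k) :=
      ENNReal.tsum_prod'
    have h2 : ∀ n : ℕ, ∑' k : ℕ, H n (n + 2 + k) = ∑' j : ℕ, H n j := by
      intro n
      have hinj : Function.Injective (fun k : ℕ => n + 2 + k) := fun x y h => by
        simpa using h
      refine Function.Injective.tsum_eq hinj ?_
      intro j hj
      rcases le_or_gt (n + 2) j with hle | hlt
      · exact ⟨j - (n + 2), by simp; omega⟩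
      · exfalso
        apply hj
        simp [hH_def, hb_zero (n + 1) j (by omega)]
    have h3 : ∀ j : ℕ, ∑' n : ℕ, H n j = ∑ n ∈ Finset.range (j - 1), H n j := by
      intro j
      refine tsum_eq_sum fun n hn => ?_
      simp only [Finset.mem_range] at hn
      have : b (n + 1) j = 0 := hb_zero _ _ (by omega)
      simp [hH_def, this]
    have h4 : ∀ j : ℕ, ∑ n ∈ Finset.range (j - 1), H n j ≤
        (if 2 ≤ j then ENNReal.ofReal (κ * (w j * f j)) else 0) := by
      intro j
      by_cases hj : 2 ≤ j
      · simp only [hj, if_true]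
        rw [← ENNReal.ofReal_sum_of_nonneg (fun i _ => mul_nonneg
            (mul_nonneg (hw_pos _ (by omega)).le (hb_nonneg _ _)) (hf _ (by omega)))]
        apply ENNReal.ofReal_le_ofReal
        have hre : ∑ n ∈ Finset.range (j - 1), w (n + 1) * b (n + 1) j * f j =
            (∑ m ∈ Finset.Ico 1 j, w m * b m j) * f j := by
          rw [Finset.sum_Ico_eq_sum_range, Finset.sum_mul]
          refine Finset.sum_congr rfl fun i _ => ?_
          rw [add_comm 1 i]
        rw [hre, mul_comm κ (w j * f j)]
        calc (∑ m ∈ Finset.Ico 1 j, w m * b m j) * f j ≤ (κ * w j) * f j :=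
              mul_le_mul_of_nonneg_right (hcond j hj) (hf _ (by omega))
          _ = w j * f j * κ := by ring
      · have : Finset.range (j - 1) = ∅ := by
          have : j - 1 = 0 := by omega
          simp [this]
        simp [this]
    have h5 : ∑' j : ℕ, (if 2 ≤ j then ENNReal.ofReal (κ * (w j * f j)) else 0)
        ≤ ENNReal.ofReal (κ * S) := by
      set D : ℕ → ENNReal := fun j => if 2 ≤ j then ENNReal.ofReal (κ * (w j * f j)) else 0
        with hD_def
      have hinj2 : Function.Injective (fun m : ℕ => m + 2) := fun x y h => by
        simpa using h
      have he1 : ∑' m : ℕ, D (m + 2) = ∑' j : ℕ, D j := by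
        refine Function.Injective.tsum_eq hinj2 ?_
        intro j hj
        rcases le_or_gt 2 j with hle | hlt
        · exact ⟨j - 2, by simp; omega⟩
        · exfalso
          apply hj
          simp [hD_def, Nat.not_le.mpr hlt]
      rw [← he1]
      have he2 : ∑' m : ℕ, D (m + 2) =
          ∑' m : ℕ, ENNReal.ofReal (κ * (w (m + 2) * f (m + 2))) := by
        refine tsum_congr fun m => ?_
        simp [hD_def]
      rw [he2]
      set E : ℕ → ENNReal := fun m => ENNReal.ofReal (κ * (w (m + 1) * f (m + 1)))
        with hE_def
      have he3 : ∑' m : ℕ, ENNReal.ofReal (κ * (w (m + 2) * f (m + 2))) =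
          ∑' m : ℕ, E (m + 1) := by
        refine tsum_congr fun m => ?_
        simp [hE_def]
      rw [he3]
      have hinj1 : Function.Injective (fun m : ℕ => m + 1) := fun x y h => by
        simpa using h
      calc ∑' m : ℕ, E (m + 1) ≤ ∑' m : ℕ, E m :=
            ENNReal.tsum_comp_le_tsum_of_injective hinj1 E
        _ = ENNReal.ofReal (κ * S) := by
            have : ∀ m : ℕ, E m = ENNReal.ofReal κ * ENNReal.ofReal (w (m + 1) * f (m + 1)) :=
              fun m => ENNReal.ofReal_mul hκ0.le
            simp_rw [this]
            rw [ENNReal.tsum_mul_left,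
              ← ENNReal.ofReal_tsum_of_nonneg
                (fun n => mul_nonneg (hw_pos _ (by omega)).le (hf _ (by omega))) hsum,
              ← ENNReal.ofReal_mul hκ0.le]
    calc ∑' p : ℕ × ℕ, ENNReal.ofReal (C p)
        = ∑' n : ℕ, ∑' j : ℕ, H n j := by rw [h1]; exact tsum_congr h2
      _ = ∑' j : ℕ, ∑' n : ℕ, H n j := ENNReal.tsum_comm
      _ ≤ ∑' j : ℕ, (if 2 ≤ j then ENNReal.ofReal (κ * (w j * f j)) else 0) := by
          refine ENNReal.tsum_le_tsum fun j => ?_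
          rw [h3 j]; exact h4 j
      _ ≤ ENNReal.ofReal (κ * S) := h5
  -- Step B: the key lintegral bound
  have hmeas : ∀ p : ℕ × ℕ, AEMeasurable
      (fun t : ℝ => ENNReal.ofReal (w (p.1 + 1) * u p.1 p.2 t))
      (volume.restrict (Set.Ioc (0:ℝ) α)) := by
    intro p
    apply Measurable.aemeasurable
    apply ENNReal.measurable_ofReal.comp
    apply Continuous.measurable
    have hexp : Continuous (fun t : ℝ => Real.exp (-a (p.1 + 2 + p.2) * t)) :=
      Real.continuous_exp.comp (continuous_const.mul continuous_id)
    simp only [hu_def]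
    exact continuous_const.mul (((continuous_const.mul hexp).mul continuous_const))
  have key : ∫⁻ t in Set.Ioc (0:ℝ) α, ENNReal.ofReal (g t) ≤ ENNReal.ofReal (κ * S) := by
    calc ∫⁻ t in Set.Ioc (0:ℝ) α, ENNReal.ofReal (g t)
        ≤ ∫⁻ t in Set.Ioc (0:ℝ) α,
            ∑' p : ℕ × ℕ, ENNReal.ofReal (w (p.1 + 1) * u p.1 p.2 t) :=
          lintegral_mono fun t => stepA t
      _ = ∑' p : ℕ × ℕ, ∫⁻ t in Set.Ioc (0:ℝ) α,
            ENNReal.ofReal (w (p.1 + 1) * u p.1 p.2 t) := lintegral_tsum hmeas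
      _ ≤ ∑' p : ℕ × ℕ, ENNReal.ofReal (C p) := ENNReal.tsum_le_tsum stepC
      _ ≤ ENNReal.ofReal (κ * S) := stepD
  -- conclude
  by_cases hint : IntervalIntegrable g volume 0 α
  · rw [show (∫ t in (0:ℝ)..α,
      ∑' n : ℕ, w (n + 1) *
        ∑' k : ℕ, a (n + 2 + k) * b (n + 1) (n + 2 + k) *
          Real.exp (-a (n + 2 + k) * t) * f (n + 2 + k)) = ∫ t in (0:ℝ)..α, g t from rfl,
      intervalIntegral.integral_of_le hα.le,
      integral_eq_lintegral_of_nonneg_ae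
        (Filter.Eventually.of_forall fun t => hg_nonneg t) hint.1.aestronglyMeasurable]
    calc (∫⁻ t in Set.Ioc (0:ℝ) α, ENNReal.ofReal (g t)).toReal
        ≤ (ENNReal.ofReal (κ * S)).toReal :=
          ENNReal.toReal_mono ENNReal.ofReal_ne_top key
      _ = κ * S := ENNReal.toReal_ofReal hRHS
  · rw [show (∫ t in (0:ℝ)..α,
      ∑' n : ℕ, w (n + 1) *
        ∑' k : ℕ, a (n + 2 + k) * b (n + 1) (n + 2 + k) *
          Real.exp (-a (n + 2 + k) * t) * f (n + 2 + k)) = ∫ t in (0:ℝ)..α, g t from rfl,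
      intervalIntegral.integral_undef hint]
    exact hRHS
end
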